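/- Under the two-stage randomized design, for every z ∈ {0,1} and mechanism a with J_a ≥ 2, the between-cluster sample variance satisfies E[σ̂_b²(z,a)] = σ_b²(z,a) + (1/J) Σ_{j=1}^J (1/n_{jz}(a)) (1 − n_{jz}(a)/n_j) σ_j²(z,a). -/

import Mathlib

/-!
Conditionally on the first-stage assignment, the clusters are independent and `Ŷ_j(z)` is the
mean of a simple random sample of `n_{jz}(a)` units of cluster `j`, so
`E[Ŷ_j(z)²] = Ȳ_j(z,a)² + (1/n_{jz}(a))(1 - n_{jz}(a)/n_j) σ_j²(z,a)` and
`E[Ŷ_j(z) Ŷ_k(z)] = Ȳ_j(z,a) Ȳ_k(z,a)` for `j ≠ k`. Writing the sample variance through squares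
and off-diagonal products, the first stage, which makes `{j | A_j = a}` a simple random sample of
`J_a` clusters, then averages these terms with inclusion probabilities `J_a/J` for a cluster and
`J_a(J_a-1)/(J(J-1))` for a pair of clusters.

Both samples are exchangeable random subsets (their law is invariant under permutations), and
that is all these moments need: by symmetry every unit, or every pair of distinct units, lies in
equally many samples, and double counting determines that number.
-/

open scoped BigOperators

noncomputable section

/-- A two-stage randomized design: `J` clusters, the `j`-th of size `n j`,
`m` treatment assignment mechanisms, `Jc a` clusters assigned to mechanism `a`,
`n1 j a` treated units in cluster `j` under mechanism `a`, and fixed potential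
outcomes `Y j i z a` (with `z : Bool`, `true` = treatment). -/
structure TwoStageDesign where
  J : ℕ
  m : ℕ
  n : Fin J → ℕ
  Jc : Fin m → ℕ
  n1 : Fin J → Fin m → ℕ
  Y : (j : Fin J) → Fin (n j) → Bool → Fin m → ℝ

namespace TwoStageDesign

variable (d : TwoStageDesign)

/-- The number of units in cluster `j` assigned to condition `z` under mechanism `a`. -/
def nz (z : Bool) (j : Fin d.J) (a : Fin d.m) : ℕ :=
  if z then d.n1 j a else d.n j - d.n1 j a

/-- Admissible first-stage assignments: mechanism `a` is given to exactly `Jc a` clusters. -/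
def mechA : Finset (Fin d.J → Fin d.m) :=
  Finset.univ.filter fun A => ∀ a, (Finset.univ.filter fun j => A j = a).card = d.Jc a

/-- Admissible second-stage assignments given the first stage `A`: the treated set in
cluster `j` has exactly `n1 j (A j)` units. -/
def treatA (A : Fin d.J → Fin d.m) : Finset ((j : Fin d.J) → Finset (Fin (d.n j))) :=
  Finset.univ.filter fun S => ∀ j, (S j).card = d.n1 j (A j)

/-- Expectation with respect to the two-stage randomization: `A` is uniform on the
admissible first-stage assignments and, given `A`, the treated sets are uniform on the
admissible second-stage assignments (independently across clusters). -/
def expec (f : (Fin d.J → Fin d.m) → ((j : Fin d.J) → Finset (Fin (d.n j))) → ℝ) : ℝ :=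
  ∑ A ∈ d.mechA, ∑ S ∈ d.treatA A,
    f A S / ((d.mechA.card : ℝ) * ((d.treatA A).card : ℝ))

/-- Covariance under the two-stage randomization. -/
def cov (f g : (Fin d.J → Fin d.m) → ((j : Fin d.J) → Finset (Fin (d.n j))) → ℝ) : ℝ :=
  d.expec fun A S => (f A S - d.expec f) * (g A S - d.expec g)

/-- Variance under the two-stage randomization. -/
def var (f : (Fin d.J → Fin d.m) → ((j : Fin d.J) → Finset (Fin (d.n j))) → ℝ) : ℝ :=
  d.cov f f

/-- Observed outcome of unit `i` in cluster `j`: `Y_{ij} = Y_{ij}(Z_{ij}, A_j)`. -/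
def Yobs (A : Fin d.J → Fin d.m) (S : (j : Fin d.J) → Finset (Fin (d.n j)))
    (j : Fin d.J) (i : Fin (d.n j)) : ℝ :=
  d.Y j i (decide (i ∈ S j)) (A j)

/-- `Ŷ_j(z)`: average observed outcome among units of cluster `j` with `Z_{ij} = z`. -/
def hatYj (A : Fin d.J → Fin d.m) (S : (j : Fin d.J) → Finset (Fin (d.n j)))
    (z : Bool) (j : Fin d.J) : ℝ :=
  (∑ i ∈ Finset.univ.filter (fun i => decide (i ∈ S j) = z), d.Yobs A S j i) /
    ((Finset.univ.filter (fun i : Fin (d.n j) => decide (i ∈ S j) = z)).card : ℝ)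

/-- `Ŷ(z,a)`: average of `Ŷ_j(z)` over clusters with `A_j = a`. -/
def hatY (A : Fin d.J → Fin d.m) (S : (j : Fin d.J) → Finset (Fin (d.n j)))
    (z : Bool) (a : Fin d.m) : ℝ :=
  (∑ j ∈ Finset.univ.filter (fun j => A j = a), d.hatYj A S z j) / (d.Jc a : ℝ)

/-- `Ȳ_j(z,a)`: cluster-level average potential outcome. -/
def Ybarj (j : Fin d.J) (z : Bool) (a : Fin d.m) : ℝ :=
  (∑ i, d.Y j i z a) / (d.n j : ℝ)

/-- `Ȳ(z,a)`: population-level average potential outcome. -/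
def Ybar (z : Bool) (a : Fin d.m) : ℝ :=
  (∑ j, d.Ybarj j z a) / (d.J : ℝ)

/-- `σ_j²(z,z';a,a')`: within-cluster covariance of the potential outcomes. -/
def sigU (j : Fin d.J) (z z' : Bool) (a a' : Fin d.m) : ℝ :=
  (∑ i, (d.Y j i z a - d.Ybarj j z a) * (d.Y j i z' a' - d.Ybarj j z' a')) /
    ((d.n j : ℝ) - 1)

/-- `σ_b²(z,z';a,a')`: between-cluster covariance of the cluster averages. -/
def sigB (z z' : Bool) (a a' : Fin d.m) : ℝ :=
  (∑ j, (d.Ybarj j z a - d.Ybar z a) * (d.Ybarj j z' a' - d.Ybar z' a')) /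
    ((d.J : ℝ) - 1)

/-- `σ̂_b²(z,z';a)`: between-cluster sample covariance among clusters with `A_j = a`. -/
def sigBhat (A : Fin d.J → Fin d.m) (S : (j : Fin d.J) → Finset (Fin (d.n j)))
    (z z' : Bool) (a : Fin d.m) : ℝ :=
  (∑ j ∈ Finset.univ.filter (fun j => A j = a),
      (d.hatYj A S z j - d.hatY A S z a) * (d.hatYj A S z' j - d.hatY A S z' a)) /
    ((d.Jc a : ℝ) - 1)

end TwoStageDesign

open Finset

section SampleVariance

variable {ι : Type*} [DecidableEq ι]

theorem sq_sum_eq_sum_sq_add_sum_offDiag (s : Finset ι) (x : ι → ℝ) :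
    (∑ j ∈ s, x j) ^ 2 = ∑ j ∈ s, x j ^ 2 + ∑ p ∈ s.offDiag, x p.1 * x p.2 := by
  rw [sq, sum_mul_sum, ← sum_product', ← diag_union_offDiag, sum_union (disjoint_diag_offDiag s),
    sum_diag]
  simp only [sq]

theorem sum_sub_mean_mul_self (s : Finset ι) (x : ι → ℝ) :
    ∑ j ∈ s, (x j - (∑ k ∈ s, x k) / #s) * (x j - (∑ k ∈ s, x k) / #s) =
      (1 - 1 / #s) * ∑ j ∈ s, x j ^ 2 - 1 / #s * ∑ p ∈ s.offDiag, x p.1 * x p.2 := by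
  rcases s.eq_empty_or_nonempty with rfl | hs
  · simp
  have hcard : (#s : ℝ) ≠ 0 := by exact_mod_cast hs.card_ne_zero
  set m := (∑ k ∈ s, x k) / #s with hm
  have hexpand : ∑ j ∈ s, (x j - m) * (x j - m) =
      ∑ j ∈ s, x j ^ 2 - 2 * m * ∑ j ∈ s, x j + #s * m ^ 2 := by
    rw [mul_sum, ← sum_sub_distrib, ← smul_eq_mul, ← nsmul_eq_mul, ← sum_const, ← sum_add_distrib]
    exact sum_congr rfl fun j _ => by ring
  rw [hexpand, hm]
  field_simp
  linear_combination -sq_sum_eq_sum_sq_add_sum_offDiag s x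

end SampleVariance

section Exchangeable

variable {X α β : Type*}

theorem expect_sum_eq_of_card_filter_mem_eq [DecidableEq β] {M : Finset X} {U : X → Finset β}
    {D : Finset β} {κ : ℕ} (hM : M.Nonempty) (hU : ∀ x ∈ M, U x ⊆ D)
    (hcard : ∀ x ∈ M, #(U x) = κ)
    (hc : ∀ p ∈ D, ∀ q ∈ D, #{x ∈ M | p ∈ U x} = #{x ∈ M | q ∈ U x}) (f : β → ℝ) :
    𝔼 x ∈ M, ∑ p ∈ U x, f p = κ / #D * ∑ p ∈ D, f p := by
  rcases D.eq_empty_or_nonempty with rfl | hD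
  · simp only [card_empty, sum_empty, mul_zero]
    exact expect_eq_zero fun x hx => by rw [subset_empty.1 (hU x hx), sum_empty]
  set c : β → ℝ := fun p => #{x ∈ M | p ∈ U x}
  have hswap (g : β → ℝ) : ∑ x ∈ M, ∑ p ∈ U x, g p = ∑ p ∈ D, c p * g p := by
    rw [sum_comm' (t' := D) (s' := fun p => {x ∈ M | p ∈ U x})]
    · simp [c, sum_const, nsmul_eq_mul]
    · intro x p
      simp only [mem_filter]
      exact ⟨fun h => ⟨⟨h.1, h.2⟩, hU x h.1 h.2⟩, fun h => h.1⟩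
  have htotal : (κ * #M : ℝ) = ∑ p ∈ D, c p := by
    have hones := hswap fun _ => 1
    simp only [sum_const, nsmul_eq_mul, mul_one] at hones
    rw [← hones, sum_congr rfl fun x hx => by rw [hcard x hx], sum_const, nsmul_eq_mul, mul_comm]
  have hconst : #D * ∑ p ∈ D, c p * f p = (∑ q ∈ D, c q) * ∑ p ∈ D, f p := by
    rw [← nsmul_eq_mul, ← sum_const, sum_mul_sum]
    exact sum_congr rfl fun q hq => sum_congr rfl fun p hp => by
      simp only [c, hc p hp q hq]
  have hDc : (#D : ℝ) ≠ 0 := by exact_mod_cast hD.card_ne_zero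
  have hMc : (#M : ℝ) ≠ 0 := by exact_mod_cast hM.card_ne_zero
  rw [expect_eq_sum_div_card, hswap, div_eq_iff hMc]
  field_simp
  linear_combination hconst - (∑ p ∈ D, f p) * htotal

/-- `T x` is a random subset of `α` when `x` is drawn uniformly from `M`; it is exchangeable when
its law is invariant under all permutations of `α`. -/
def IsExchangeable (M : Finset X) (T : X → Finset α) : Prop :=
  ∀ (σ : Equiv.Perm α) (F : Finset α → ℕ),
    ∑ x ∈ M, F ((T x).map σ.toEmbedding) = ∑ x ∈ M, F (T x)

namespace IsExchangeable

variable {M : Finset X} {T : X → Finset α}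

theorem card_filter_map_eq (h : IsExchangeable M T) (σ : Equiv.Perm α) (P : Finset α → Prop)
    [DecidablePred P] : #{x ∈ M | P ((T x).map σ.toEmbedding)} = #{x ∈ M | P (T x)} := by
  simpa only [card_filter] using h σ fun s => if P s then 1 else 0

variable [DecidableEq α]

theorem card_filter_mem_eq (h : IsExchangeable M T) (i i' : α) :
    #{x ∈ M | i ∈ T x} = #{x ∈ M | i' ∈ T x} := by
  rw [← h.card_filter_map_eq (Equiv.swap i i') (i' ∈ ·)]
  simp [mem_map_equiv]

theorem card_filter_mem_offDiag_eq (h : IsExchangeable M T) {p q : α × α} (hp : p.1 ≠ p.2)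
    (hq : q.1 ≠ q.2) : #{x ∈ M | p ∈ (T x).offDiag} = #{x ∈ M | q ∈ (T x).offDiag} := by
  obtain ⟨σ, hσ⟩ := Equiv.Perm.exists_extending_pair ![p.1, p.2] ![q.1, q.2]
    (by simp [Function.Injective, Fin.forall_fin_two, hp, hp.symm])
    (by simp [Function.Injective, Fin.forall_fin_two, hq, hq.symm])
  rw [← h.card_filter_map_eq σ (q ∈ ·.offDiag)]
  have h1 : σ p.1 = q.1 := hσ 0
  have h2 : σ p.2 = q.2 := hσ 1
  simp [← h1, ← h2]

variable [Fintype α] {κ : ℕ}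

theorem expect_sum (h : IsExchangeable M T) (hM : M.Nonempty) (hT : ∀ x ∈ M, #(T x) = κ)
    (f : α → ℝ) : 𝔼 x ∈ M, ∑ i ∈ T x, f i = κ / Fintype.card α * ∑ i, f i := by
  simpa using expect_sum_eq_of_card_filter_mem_eq hM (fun x _ => subset_univ (T x)) hT
    (fun i _ i' _ => h.card_filter_mem_eq i i') f

theorem expect_sum_offDiag (h : IsExchangeable M T) (hM : M.Nonempty)
    (hT : ∀ x ∈ M, #(T x) = κ) (g : α × α → ℝ) :
    𝔼 x ∈ M, ∑ p ∈ (T x).offDiag, g p =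
      κ * (κ - 1) / (Fintype.card α * (Fintype.card α - 1)) * ∑ p ∈ univ.offDiag, g p := by
  rw [expect_sum_eq_of_card_filter_mem_eq hM (U := fun x => (T x).offDiag)
    (fun x _ => offDiag_mono (subset_univ (T x))) (fun x hx => by rw [offDiag_card, hT x hx])
    (fun p hp q hq => h.card_filter_mem_offDiag_eq (mem_offDiag.1 hp).2.2 (mem_offDiag.1 hq).2.2),
    offDiag_card, card_univ, Nat.cast_sub (Nat.le_mul_self _), Nat.cast_sub (Nat.le_mul_self _)]
  push_cast
  ring

theorem expect_sampleMean (h : IsExchangeable M T) (hM : M.Nonempty) (hT : ∀ x ∈ M, #(T x) = κ)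
    (hκ : κ ≠ 0) (y : α → ℝ) :
    𝔼 x ∈ M, (∑ i ∈ T x, y i) / κ = (∑ i, y i) / Fintype.card α := by
  obtain ⟨x, hx⟩ := hM
  have hκN : κ ≤ Fintype.card α := hT x hx ▸ card_le_univ (T x)
  have hN : (Fintype.card α : ℝ) ≠ 0 := Nat.cast_ne_zero.2 (by omega)
  rw [← expect_div, h.expect_sum ⟨x, hx⟩ hT]
  field_simp

theorem expect_sampleMean_sq (h : IsExchangeable M T) (hM : M.Nonempty)
    (hT : ∀ x ∈ M, #(T x) = κ) (hκ : κ ≠ 0) (hN : 2 ≤ Fintype.card α) (y : α → ℝ) :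
    𝔼 x ∈ M, ((∑ i ∈ T x, y i) / κ) ^ 2 =
      ((∑ i, y i) / Fintype.card α) ^ 2 + 1 / κ * (1 - κ / Fintype.card α) *
        ((∑ i, (y i - (∑ k, y k) / Fintype.card α) * (y i - (∑ k, y k) / Fintype.card α)) /
          (Fintype.card α - 1)) := by
  have hvar := sum_sub_mean_mul_self univ y
  rw [card_univ] at hvar
  simp only [div_pow, ← expect_div, sq_sum_eq_sum_sq_add_sum_offDiag, expect_add_distrib,
    h.expect_sum hM hT, h.expect_sum_offDiag hM hT, hvar]
  have hN' : (2 : ℝ) ≤ Fintype.card α := by exact_mod_cast hN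
  have hN1 : (Fintype.card α : ℝ) - 1 ≠ 0 := by linarith
  have hκ' : (κ : ℝ) ≠ 0 := by exact_mod_cast hκ
  field_simp
  ring

end IsExchangeable

variable [Fintype α]

theorem isExchangeable_powersetCard (κ : ℕ) :
    IsExchangeable (powersetCard κ (univ : Finset α)) id := by
  intro σ F
  calc ∑ t ∈ powersetCard κ univ, F (t.map σ.toEmbedding)
      = ∑ t ∈ (powersetCard κ univ).map (mapEmbedding σ.toEmbedding).toEmbedding, F t :=
        (sum_map _ (mapEmbedding σ.toEmbedding).toEmbedding F).symm
    _ = ∑ t ∈ powersetCard κ univ, F t := by rw [← powersetCard_map, map_univ_equiv]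

variable [DecidableEq α]

def arm (z : Bool) (s : Finset α) : Finset α :=
  {i | decide (i ∈ s) = z}

theorem map_arm (σ : Equiv.Perm α) (z : Bool) (s : Finset α) :
    (arm z s).map σ.toEmbedding = arm z (s.map σ.toEmbedding) := by
  ext i
  simp [arm, mem_map_equiv]

theorem isExchangeable_arm (κ : ℕ) (z : Bool) :
    IsExchangeable (powersetCard κ (univ : Finset α)) (arm z) := by
  intro σ F
  simpa only [map_arm, Function.comp_apply, id] using isExchangeable_powersetCard κ σ (F ∘ arm z)

end Exchangeable

section Product

variable {ι : Type*} [Fintype ι] [DecidableEq ι] {γ : ι → Type*}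

theorem expect_piFinset_prod (t : ∀ i, Finset (γ i)) (F : ∀ i, γ i → ℝ) :
    𝔼 S ∈ Fintype.piFinset t, ∏ i, F i (S i) = ∏ i, 𝔼 s ∈ t i, F i s := by
  simp only [expect_eq_sum_div_card, ← prod_univ_sum, Fintype.card_piFinset, Nat.cast_prod,
    prod_div_distrib]

variable {t : ∀ i, Finset (γ i)}

theorem expect_piFinset_apply (ht : ∀ i, (t i).Nonempty) (j : ι) (g : γ j → ℝ) :
    𝔼 S ∈ Fintype.piFinset t, g (S j) = 𝔼 s ∈ t j, g s := by
  let F : ∀ i, γ i → ℝ := Function.update (fun _ _ => 1) j g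
  calc 𝔼 S ∈ Fintype.piFinset t, g (S j) = 𝔼 S ∈ Fintype.piFinset t, ∏ i, F i (S i) :=
        expect_congr rfl fun S _ => by
          rw [prod_eq_single_of_mem j (mem_univ j) fun i _ hij => by simp [F, hij]]
          simp [F]
    _ = ∏ i, 𝔼 s ∈ t i, F i s := expect_piFinset_prod t F
    _ = 𝔼 s ∈ t j, g s := by
          rw [prod_eq_single_of_mem j (mem_univ j) fun i _ hij => by simp [F, hij, ht i]]
          simp [F]

theorem expect_piFinset_apply_mul_apply (ht : ∀ i, (t i).Nonempty) {j k : ι} (hjk : j ≠ k)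
    (g : γ j → ℝ) (h : γ k → ℝ) :
    𝔼 S ∈ Fintype.piFinset t, g (S j) * h (S k) = (𝔼 s ∈ t j, g s) * 𝔼 s ∈ t k, h s := by
  let F : ∀ i, γ i → ℝ := Function.update (Function.update (fun _ _ => 1) j g) k h
  calc 𝔼 S ∈ Fintype.piFinset t, g (S j) * h (S k)
        = 𝔼 S ∈ Fintype.piFinset t, ∏ i, F i (S i) :=
        expect_congr rfl fun S _ => by
          rw [prod_eq_mul_of_mem j k (mem_univ j) (mem_univ k) hjk fun i _ hi => by simp [F, hi]]
          simp [F, hjk]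
    _ = ∏ i, 𝔼 s ∈ t i, F i s := expect_piFinset_prod t F
    _ = (𝔼 s ∈ t j, g s) * 𝔼 s ∈ t k, h s := by
          rw [prod_eq_mul_of_mem j k (mem_univ j) (mem_univ k) hjk fun i _ hi => by
            simp [F, hi, ht i]]
          simp [F, hjk]

end Product

namespace TwoStageDesign

variable (d : TwoStageDesign)

/-- `Ŷ_j(z)` as a function of the treated set `s` of cluster `j` under mechanism `a`. -/
def clusterMean (z : Bool) (j : Fin d.J) (a : Fin d.m) (s : Finset (Fin (d.n j))) : ℝ :=
  (∑ i ∈ arm z s, d.Y j i z a) / #(arm z s)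

theorem hatYj_eq_clusterMean (A : Fin d.J → Fin d.m) (S : (j : Fin d.J) → Finset (Fin (d.n j)))
    (z : Bool) (j : Fin d.J) : d.hatYj A S z j = d.clusterMean z j (A j) (S j) := by
  unfold hatYj clusterMean arm
  congr 1
  exact sum_congr rfl fun i hi => by simp [Yobs, (mem_filter.1 hi).2]

variable {d}

theorem card_arm {z : Bool} {j : Fin d.J} {a : Fin d.m} {s : Finset (Fin (d.n j))}
    (hs : #s = d.n1 j a) : #(arm z s) = d.nz z j a := by
  cases z <;> simp [arm, nz, filter_not, card_univ_sdiff, hs]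

theorem nz_ne_zero {z : Bool} {j : Fin d.J} {a : Fin d.m} (hlo : 1 ≤ d.n1 j a)
    (hhi : d.n1 j a ≤ d.n j - 1) : d.nz z j a ≠ 0 := by
  cases z <;> simp [nz] <;> omega

theorem expect_clusterMean (z : Bool) {j : Fin d.J} {a : Fin d.m} (hlo : 1 ≤ d.n1 j a)
    (hhi : d.n1 j a ≤ d.n j - 1) :
    𝔼 s ∈ powersetCard (d.n1 j a) univ, d.clusterMean z j a s = d.Ybarj j z a := by
  have hT : ∀ s ∈ powersetCard (d.n1 j a) univ, #(arm z s) = d.nz z j a :=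
    fun s hs => card_arm (mem_powersetCard_univ.1 hs)
  have h := (isExchangeable_arm (d.n1 j a) z).expect_sampleMean
    (powersetCard_nonempty.2 (by simp; omega)) hT (nz_ne_zero hlo hhi) (d.Y j · z a)
  rw [Fintype.card_fin] at h
  rw [Ybarj, ← h]
  exact expect_congr rfl fun s hs => by rw [clusterMean, hT s hs]

theorem expect_clusterMean_sq (z : Bool) {j : Fin d.J} {a : Fin d.m} (hlo : 1 ≤ d.n1 j a)
    (hhi : d.n1 j a ≤ d.n j - 1) :
    𝔼 s ∈ powersetCard (d.n1 j a) univ, d.clusterMean z j a s ^ 2 =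
      d.Ybarj j z a ^ 2 + 1 / d.nz z j a * (1 - d.nz z j a / d.n j) * d.sigU j z z a a := by
  have hT : ∀ s ∈ powersetCard (d.n1 j a) univ, #(arm z s) = d.nz z j a :=
    fun s hs => card_arm (mem_powersetCard_univ.1 hs)
  have h := (isExchangeable_arm (d.n1 j a) z).expect_sampleMean_sq
    (powersetCard_nonempty.2 (by simp; omega)) hT (nz_ne_zero hlo hhi) (by simp; omega)
    (d.Y j · z a)
  rw [Fintype.card_fin] at h
  rw [sigU, Ybarj, ← h]
  exact expect_congr rfl fun s hs => by rw [clusterMean, hT s hs]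

theorem treatA_eq_piFinset (A : Fin d.J → Fin d.m) :
    d.treatA A = Fintype.piFinset fun j => powersetCard (d.n1 j (A j)) univ := by
  ext S
  simp [treatA, Fintype.mem_piFinset]

theorem powersetCard_n1_nonempty (hhi : ∀ j b, d.n1 j b ≤ d.n j - 1) (A : Fin d.J → Fin d.m)
    (j : Fin d.J) : (powersetCard (d.n1 j (A j)) (univ : Finset (Fin (d.n j)))).Nonempty :=
  powersetCard_nonempty.2 (by simpa using (hhi j (A j)).trans (Nat.sub_le _ 1))

theorem expect_hatYj_sq (z : Bool) {A : Fin d.J → Fin d.m} {j : Fin d.J} {a : Fin d.m}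
    (hj : A j = a) (hlo : ∀ j b, 1 ≤ d.n1 j b) (hhi : ∀ j b, d.n1 j b ≤ d.n j - 1) :
    𝔼 S ∈ d.treatA A, d.hatYj A S z j ^ 2 =
      d.Ybarj j z a ^ 2 + 1 / d.nz z j a * (1 - d.nz z j a / d.n j) * d.sigU j z z a a := by
  subst hj
  simp only [treatA_eq_piFinset, hatYj_eq_clusterMean]
  rw [expect_piFinset_apply (powersetCard_n1_nonempty hhi A) j
    fun s => d.clusterMean z j (A j) s ^ 2]
  exact expect_clusterMean_sq z (hlo j (A j)) (hhi j (A j))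

theorem expect_hatYj_mul_hatYj (z : Bool) {A : Fin d.J → Fin d.m} {j k : Fin d.J} {a : Fin d.m}
    (hjk : j ≠ k) (hj : A j = a) (hk : A k = a) (hlo : ∀ j b, 1 ≤ d.n1 j b)
    (hhi : ∀ j b, d.n1 j b ≤ d.n j - 1) :
    𝔼 S ∈ d.treatA A, d.hatYj A S z j * d.hatYj A S z k = d.Ybarj j z a * d.Ybarj k z a := by
  subst hj
  simp only [treatA_eq_piFinset, hatYj_eq_clusterMean]
  rw [expect_piFinset_apply_mul_apply (powersetCard_n1_nonempty hhi A) hjk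
    (d.clusterMean z j (A j)) (d.clusterMean z k (A k)), hk,
    expect_clusterMean z (hlo j (A j)) (hhi j (A j)), expect_clusterMean z (hlo k _) (hhi k _)]

theorem card_filter_eq_Jc {A : Fin d.J → Fin d.m} (hA : A ∈ d.mechA) (a : Fin d.m) :
    #{j | A j = a} = d.Jc a :=
  (mem_filter.1 hA).2 a

theorem Jc_le_J (hM : d.mechA.Nonempty) (a : Fin d.m) : d.Jc a ≤ d.J := by
  obtain ⟨A, hA⟩ := hM
  simpa [card_filter_eq_Jc hA] using card_le_univ ({j | A j = a} : Finset _)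

theorem sigBhat_self_eq {A : Fin d.J → Fin d.m} (hA : A ∈ d.mechA)
    (S : (j : Fin d.J) → Finset (Fin (d.n j))) (z : Bool) (a : Fin d.m) :
    d.sigBhat A S z z a =
      ((1 - 1 / d.Jc a) * ∑ j ∈ {j | A j = a}, d.hatYj A S z j ^ 2 -
        1 / d.Jc a * ∑ p ∈ ({j | A j = a} : Finset _).offDiag,
          d.hatYj A S z p.1 * d.hatYj A S z p.2) / (d.Jc a - 1) := by
  rw [sigBhat, hatY, ← card_filter_eq_Jc hA, sum_sub_mean_mul_self]

variable (d)

theorem expect_sigBhat_treatA (z : Bool) {A : Fin d.J → Fin d.m} (hA : A ∈ d.mechA)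
    (a : Fin d.m) (hlo : ∀ j b, 1 ≤ d.n1 j b) (hhi : ∀ j b, d.n1 j b ≤ d.n j - 1) :
    𝔼 S ∈ d.treatA A, d.sigBhat A S z z a =
      ((1 - 1 / d.Jc a) * ∑ j ∈ {j | A j = a},
          (d.Ybarj j z a ^ 2 + 1 / d.nz z j a * (1 - d.nz z j a / d.n j) * d.sigU j z z a a) -
        1 / d.Jc a * ∑ p ∈ ({j | A j = a} : Finset _).offDiag,
          d.Ybarj p.1 z a * d.Ybarj p.2 z a) / (d.Jc a - 1) := by
  simp only [sigBhat_self_eq hA, ← expect_div, expect_sub_distrib, ← mul_expect, expect_sum_comm]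
  congr 3
  · exact sum_congr rfl fun j hj => expect_hatYj_sq z (mem_filter.1 hj).2 hlo hhi
  · refine sum_congr rfl fun p hp => ?_
    obtain ⟨hj, hk, hjk⟩ := mem_offDiag.1 hp
    exact expect_hatYj_mul_hatYj z hjk (mem_filter.1 hj).2 (mem_filter.1 hk).2 hlo hhi

theorem isExchangeable_mechA (a : Fin d.m) : IsExchangeable d.mechA fun A => {j | A j = a} := by
  intro σ F
  have hmap (A : Fin d.J → Fin d.m) (b : Fin d.m) :
      ({j | A (σ.symm j) = b} : Finset _) = ({j | A j = b} : Finset _).map σ.toEmbedding := by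
    ext j
    simp [mem_map_equiv]
  refine sum_equiv (σ.arrowCongr (Equiv.refl _)) (fun A => ?_) fun A _ => ?_
  · simp [mechA, hmap]
  · simp [hmap]

theorem mechA_nonempty (hJsum : ∑ a, d.Jc a = d.J) : d.mechA.Nonempty := by
  have e : Fin d.J ≃ Σ a, Fin (d.Jc a) := Fintype.equivOfCardEq (by simp [hJsum])
  refine ⟨fun j => (e j).1, mem_filter.2 ⟨mem_univ _, fun a => ?_⟩⟩
  rw [card_equiv e (t := {x | x.1 = a}) (by simp), card_filter, Fintype.sum_sigma]
  simp [apply_ite]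

theorem expec_eq_expect (f : (Fin d.J → Fin d.m) → ((j : Fin d.J) → Finset (Fin (d.n j))) → ℝ) :
    d.expec f = 𝔼 A ∈ d.mechA, 𝔼 S ∈ d.treatA A, f A S := by
  simp only [expec, expect_eq_sum_div_card, sum_div, div_div, mul_comm]

end TwoStageDesign

theorem expec_sigBhat_var_general (d : TwoStageDesign)
    (hJsum : ∑ a, d.Jc a = d.J)
    (hn1lo : ∀ j a, 1 ≤ d.n1 j a) (hn1hi : ∀ j a, d.n1 j a ≤ d.n j - 1)
    (z : Bool) (a : Fin d.m) (hJa : 2 ≤ d.Jc a) :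
    d.expec (fun A S => d.sigBhat A S z z a) =
      d.sigB z z a a +
        (1 / (d.J : ℝ)) *
          ∑ j, (1 / (d.nz z j a : ℝ)) * (1 - (d.nz z j a : ℝ) / (d.n j : ℝ)) *
            d.sigU j z z a a := by
  have hM := d.mechA_nonempty hJsum
  have hT (A) (hA : A ∈ d.mechA) := TwoStageDesign.card_filter_eq_Jc hA a
  rw [d.expec_eq_expect, expect_congr rfl fun A hA => d.expect_sigBhat_treatA z hA a hn1lo hn1hi]
  simp only [← expect_div, expect_sub_distrib, ← mul_expect,
    (d.isExchangeable_mechA a).expect_sum hM hT,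
    (d.isExchangeable_mechA a).expect_sum_offDiag hM hT fun p => d.Ybarj p.1 z a * d.Ybarj p.2 z a]
  have hsigB := sum_sub_mean_mul_self univ (d.Ybarj · z a)
  rw [card_univ, Fintype.card_fin] at hsigB
  rw [TwoStageDesign.sigB, TwoStageDesign.Ybar, hsigB, sum_add_distrib, Fintype.card_fin]
  have hJa' : (2 : ℝ) ≤ d.Jc a := by exact_mod_cast hJa
  have hJ : (d.Jc a : ℝ) ≤ d.J := by exact_mod_cast TwoStageDesign.Jc_le_J hM a
  have h0 : (d.J : ℝ) ≠ 0 := by linarith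
  have h1 : (d.J : ℝ) - 1 ≠ 0 := by linarith
  have h2 : (d.Jc a : ℝ) - 1 ≠ 0 := by linarith
  field_simp
  ring

/-- **Expectation of the between-cluster sample variance.** Under the two-stage
randomized design, for every `z` and mechanism `a` with `J_a ≥ 2`,
`E[σ̂_b²(z,a)] = σ_b²(z,a) + (1/J) ∑_j (1/n_{jz}(a))(1 − n_{jz}(a)/n_j) σ_j²(z,a)`. -/
theorem expec_sigBhat_var (d : TwoStageDesign)
    (hJ : 2 ≤ d.J) (hn : ∀ j, 2 ≤ d.n j)
    (hJc : ∀ a, 1 ≤ d.Jc a) (hJsum : ∑ a, d.Jc a = d.J)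
    (hn1lo : ∀ j a, 1 ≤ d.n1 j a) (hn1hi : ∀ j a, d.n1 j a ≤ d.n j - 1)
    (z : Bool) (a : Fin d.m) (hJa : 2 ≤ d.Jc a) :
    d.expec (fun A S => d.sigBhat A S z z a) =
      d.sigB z z a a +
        (1 / (d.J : ℝ)) *
          ∑ j, (1 / (d.nz z j a : ℝ)) * (1 - (d.nz z j a : ℝ) / (d.n j : ℝ)) *
            d.sigU j z z a a :=
  expec_sigBhat_var_general d hJsum hn1lo hn1hi z a hJa
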